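/- Error bound for spectrum-sliced incremental random binning (information reconciliation): Let 𝒳, 𝒴 be countable sets and P_{XY} a pmf on 𝒳×𝒴. Let λ_min, Δ, γ > 0, L a positive integer, and for 1 ≤ j ≤ L set λ_j = λ_min + (j−1)·Δ and 𝒯_j = { (x,y) : λ_j ≤ −log P_{X|Y}(x|y) < λ_j + Δ }. Let M_1, …, M_L be positive integers satisfying log(M_1·M_2⋯M_l) ≥ λ_l + Δ + γ for every 1 ≤ l ≤ L. Then there exist functions F_j : 𝒳 → {1,…,M_j}, 1 ≤ j ≤ L, such that P_{XY}( { (x,y) : ∃ l ∈ {1,…,L}, ∃ x̂ ≠ x with (x̂,y) ∈ 𝒯_l and F_j(x̂) = F_j(x) for all 1 ≤ j ≤ l } ) ≤ L·2^{−γ}. -/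

import Mathlib

open scoped BigOperators

noncomputable section

attribute [local instance] Classical.propDecidable

/-- Probability of a set under a pmf. -/
def probOf {α : Type*} (P : α → ℝ) (S : Set α) : ℝ := ∑' a : S, P a

/-- `P` is a probability mass function. -/
def IsPMF {α : Type*} (P : α → ℝ) : Prop := (∀ a, 0 ≤ P a) ∧ ∑' a, P a = 1

def pmargY {X Y : Type*} (P : X × Y → ℝ) : Y → ℝ := fun y => ∑' x : X, P (x, y)

/-- `P_{X|Y}(x|y) = P_XY(x,y)/P_Y(y)`. -/
def pcondXY {X Y : Type*} (P : X × Y → ℝ) (p : X × Y) : ℝ := P p / pmargY P p.2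

/-! Draw the bins uniformly at random. For fixed `x̂ ≠ x`, the first `l` bin indices of `x̂`
and `x` agree with probability `1 / (M_1 ⋯ M_l) ≤ 2 ^ (-(λ_l + Δ + γ))`, and the slice `𝒯_l` over
`y` has at most `2 ^ (λ_l + Δ)` points, since each has conditional probability above
`2 ^ (-(λ_l + Δ))`. A union bound over `l` and over the slice bounds the expected error by
`L · 2 ^ (-γ)`, so some binning does as well. As `𝒳` may be infinite, this is done for each finite
set of pairs, drawing bins only on the finitely many inputs involved; the error event of a pair is
open in the compact product of the finite bin sets, so a single binning works for all finite sets
at once. -/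

open Finset

theorem exists_probOf_le_of_forall_finset {Φ α : Type*} [TopologicalSpace Φ] [CompactSpace Φ]
    {w : α → ℝ} (hw : ∀ a, 0 ≤ w a) (E : Φ → Set α) (hE : ∀ a, IsOpen {F | a ∈ E F}) {c : ℝ}
    (h : ∀ s : Finset α, ∃ F, ∑ a ∈ s, (E F).indicator w a ≤ c) :
    ∃ F, probOf w (E F) ≤ c := by
  let K : Finset α → Set Φ := fun s => {F | ∑ a ∈ s, (E F).indicator w a ≤ c}
  have hK_closed (s : Finset α) : IsClosed (K s) :=
    (lowerSemicontinuous_sum fun a _ =>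
      (hE a).lowerSemicontinuous_indicator (hw a)).isClosed_preimage c
  have hK_mono {s t : Finset α} (hst : s ⊆ t) : K t ⊆ K s := fun F hF =>
    (sum_le_sum_of_subset_of_nonneg hst fun a _ _ =>
      Set.indicator_nonneg (fun a _ => hw a) a).trans hF
  have hK_dir : Directed (· ⊇ ·) K := fun s t =>
    ⟨s ∪ t, hK_mono subset_union_left, hK_mono subset_union_right⟩
  obtain ⟨F, hF⟩ := IsCompact.nonempty_iInter_of_directed_nonempty_isCompact_isClosed K hK_dir h
    (fun s => (hK_closed s).isCompact) hK_closed
  have hF : ∀ s, F ∈ K s := Set.mem_iInter.1 hF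
  refine ⟨F, ?_⟩
  rw [probOf, _root_.tsum_subtype]
  exact tsum_le_of_sum_le' (by simpa [K] using hF ∅) hF

theorem exists_sum_indicator_le_of_card_le {Ω α : Type*} [Fintype Ω] [Nonempty Ω]
    {s : Finset α} {w : α → ℝ} (hw : ∀ a ∈ s, 0 ≤ w a) (E : Ω → Set α) {ε : ℝ}
    (hE : ∀ a ∈ s, (#{φ | a ∈ E φ} : ℝ) ≤ ε * Fintype.card Ω) :
    ∃ φ, ∑ a ∈ s, (E φ).indicator w a ≤ ε * ∑ a ∈ s, w a := by
  have hsum : ∑ φ, ∑ a ∈ s, (E φ).indicator w a ≤ ∑ _φ : Ω, ε * ∑ a ∈ s, w a := calc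
    ∑ φ, ∑ a ∈ s, (E φ).indicator w a = ∑ a ∈ s, w a * #{φ | a ∈ E φ} := by
      rw [sum_comm]
      refine sum_congr rfl fun a _ => ?_
      simp only [Set.indicator_apply]
      rw [← sum_filter, sum_const, nsmul_eq_mul, mul_comm]
    _ ≤ ∑ a ∈ s, w a * (ε * Fintype.card Ω) :=
      sum_le_sum fun a ha => mul_le_mul_of_nonneg_left (hE a ha) (hw a ha)
    _ = ∑ _φ : Ω, ε * ∑ a ∈ s, w a := by
      rw [sum_const, card_univ, nsmul_eq_mul, mul_sum, mul_sum]
      exact sum_congr rfl fun a _ => by ring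
  obtain ⟨φ, -, hφ⟩ := exists_le_of_sum_le univ_nonempty hsum
  exact ⟨φ, hφ⟩

theorem card_filter_apply_eq_apply_mul_card {C β : Type*} [Fintype C] [DecidableEq C]
    [Fintype β] [DecidableEq β] {a b : C} (hab : a ≠ b) :
    #{f : C → β | f b = f a} * Fintype.card β = Fintype.card (C → β) := by
  let e := Equiv.funSplitAt b β
  have hcount : #{f : C → β | f b = f a} = Fintype.card ({x // x ≠ b} → β) := by
    rw [card_filter, Fintype.sum_equiv e (fun f : C → β => if f b = f a then 1 else 0)
      (fun q => if q.1 = q.2 ⟨a, hab⟩ then 1 else 0) fun f => rfl, Fintype.sum_prod_type_right]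
    simp
  rw [hcount, Fintype.card_congr e, Fintype.card_prod, mul_comm]

theorem card_filter_forall_apply_eq_apply_mul_prod {ι C : Type*} [Fintype ι] [DecidableEq ι]
    [Fintype C] [DecidableEq C] {β : ι → Type*} [∀ i, Fintype (β i)] [∀ i, DecidableEq (β i)]
    {a b : C} (hab : a ≠ b) (t : Finset ι) :
    #{φ : (i : ι) → C → β i | ∀ i ∈ t, φ i b = φ i a} * ∏ i ∈ t, Fintype.card (β i) =
      Fintype.card ((i : ι) → C → β i) := by
  have hfilter : ({φ : (i : ι) → C → β i | ∀ i ∈ t, φ i b = φ i a} : Finset _) =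
      Fintype.piFinset fun i => if i ∈ t then ({f : C → β i | f b = f a} : Finset _) else univ := by
    ext φ
    simp only [mem_filter, mem_univ, true_and, Fintype.mem_piFinset]
    refine forall_congr' fun i => ?_
    split_ifs with hi <;> simp [hi]
  have hprod : ∏ i ∈ t, Fintype.card (β i) = ∏ i, if i ∈ t then Fintype.card (β i) else 1 := by
    rw [prod_ite_mem, univ_inter]
  rw [hfilter, Fintype.card_piFinset, hprod, Fintype.card_pi, ← prod_mul_distrib]
  refine prod_congr rfl fun i _ => ?_
  split_ifs
  · exact card_filter_apply_eq_apply_mul_card hab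
  · simp

theorem finite_setOf_lt_div_tsum {X : Type*} {f : X → ℝ} (hf : 0 ≤ f) (hsum : Summable f)
    {r : ℝ} (hr : 0 < r) : {x | r < f x / ∑' x, f x}.Finite := by
  rcases (tsum_nonneg hf : 0 ≤ ∑' x, f x).eq_or_lt with hzero | hpos
  · simp [← hzero, not_lt.2 hr.le]
  have hsmall : ∀ᶠ x in Filter.cofinite, f x < r * ∑' x, f x :=
    hsum.tendsto_cofinite_zero.eventually (gt_mem_nhds (mul_pos hr hpos))
  refine (Filter.eventually_cofinite.1 hsmall).subset fun x hx => ?_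
  simp only [Set.mem_ofPred_eq, lt_div_iff₀ hpos] at hx
  exact not_lt.2 hx.le

theorem ncard_setOf_lt_div_tsum_mul_le {X : Type*} {f : X → ℝ} (hf : 0 ≤ f) (hsum : Summable f)
    {r : ℝ} (hr : 0 < r) : ({x | r < f x / ∑' x, f x}.ncard : ℝ) * r ≤ 1 := by
  set S := {x | r < f x / ∑' x, f x}
  have hS := finite_setOf_lt_div_tsum hf hsum hr
  rcases S.eq_empty_or_nonempty with hempty | ⟨x₀, hx₀⟩
  · simp [hempty]
  have hpos : 0 < ∑' x, f x := by
    by_contra! h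
    have : f x₀ / ∑' x, f x ≤ 0 := div_nonpos_of_nonneg_of_nonpos (hf x₀) h
    exact (hr.trans (hx₀ : r < _)).not_ge this
  set T := hS.toFinset
  have hT : (T.card : ℝ) * r * ∑' x, f x ≤ ∑' x, f x := calc
    (T.card : ℝ) * r * ∑' x, f x = ∑ _x ∈ T, r * ∑' x, f x := by
      rw [sum_const, nsmul_eq_mul, mul_assoc]
    _ ≤ ∑ x ∈ T, f x := sum_le_sum fun x hx =>
      ((lt_div_iff₀ hpos).1 (hS.mem_toFinset.1 hx)).le
    _ ≤ ∑' x, f x := hsum.sum_le_tsum T fun x _ => hf x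
  rw [Set.ncard_eq_toFinset_card S hS]
  exact (mul_le_iff_le_one_left hpos).1 hT

theorem IsPMF.summable {α : Type*} {P : α → ℝ} (hP : IsPMF P) : Summable P :=
  by_contra fun h => one_ne_zero (hP.2.symm.trans (tsum_eq_zero_of_not_summable h))

section SpectrumSlice

variable {X Y : Type*} {P : X × Y → ℝ} {lo hi : ℝ}

theorem IsPMF.summable_comp_mk_left (hP : IsPMF P) (y : Y) : Summable fun x => P (x, y) :=
  hP.summable.comp_injective (Prod.mk_left_injective y)

def spectrumSlice (P : X × Y → ℝ) (lo hi : ℝ) (y : Y) : Set X :=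
  {x | lo ≤ -Real.logb 2 (pcondXY P (x, y)) ∧ -Real.logb 2 (pcondXY P (x, y)) < hi}

/-- Since `logb 2 0 = 0`, a positive lower end `lo` keeps the zeros of `P_{X|Y}` out of a slice. -/
theorem spectrumSlice_subset (hP : ∀ p, 0 ≤ P p) (hlo : 0 < lo) (y : Y) :
    spectrumSlice P lo hi y ⊆ {x | 2 ^ (-hi) < P (x, y) / ∑' x, P (x, y)} := by
  rintro x ⟨hlo_le, hlt_hi⟩
  have hcond_nonneg : 0 ≤ pcondXY P (x, y) := div_nonneg (hP _) (tsum_nonneg fun x => hP _)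
  have hcond_pos : 0 < pcondXY P (x, y) := by
    refine hcond_nonneg.lt_of_ne fun h => ?_
    rw [← h, Real.logb_zero, neg_zero] at hlo_le
    exact hlo.not_ge hlo_le
  exact (Real.lt_logb_iff_rpow_lt one_lt_two hcond_pos).1 (by linarith)

theorem spectrumSlice_finite (hP : IsPMF P) (hlo : 0 < lo) (y : Y) :
    (spectrumSlice P lo hi y).Finite :=
  (finite_setOf_lt_div_tsum (fun x => hP.1 (x, y)) (hP.summable_comp_mk_left y)
    (by positivity)).subset (spectrumSlice_subset hP.1 hlo y)

theorem ncard_spectrumSlice_le (hP : IsPMF P) (hlo : 0 < lo) (y : Y) :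
    ((spectrumSlice P lo hi y).ncard : ℝ) ≤ 2 ^ hi := by
  have hsection := hP.summable_comp_mk_left y
  set S := {x | (2 : ℝ) ^ (-hi) < P (x, y) / ∑' x, P (x, y)}
  have hbound : (S.ncard : ℝ) * 2 ^ (-hi) ≤ 1 :=
    ncard_setOf_lt_div_tsum_mul_le (fun x => hP.1 (x, y)) hsection (by positivity)
  calc ((spectrumSlice P lo hi y).ncard : ℝ) ≤ S.ncard := by
        exact_mod_cast Set.ncard_le_ncard (spectrumSlice_subset hP.1 hlo y)
          (finite_setOf_lt_div_tsum (fun x => hP.1 (x, y)) hsection (by positivity))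
    _ ≤ 1 / 2 ^ (-hi) := (le_div_iff₀ (by positivity)).2 hbound
    _ = 2 ^ hi := by rw [Real.rpow_neg zero_le_two, one_div, inv_inv]

end SpectrumSlice

section Binning

variable {X Y : Type*} {L : ℕ} {M : Fin L → ℕ} {P : X × Y → ℝ} {lo hi : Fin L → ℝ}

def binningErrorEvent (P : X × Y → ℝ) (lo hi : Fin L → ℝ) (F : (j : Fin L) → X → Fin (M j)) :
    Set (X × Y) :=
  {p | ∃ l : Fin L, ∃ x', x' ≠ p.1 ∧ x' ∈ spectrumSlice P (lo l) (hi l) p.2 ∧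
    ∀ j, j ≤ l → F j x' = F j p.1}

def binningErrorBound (M : Fin L → ℕ) (hi : Fin L → ℝ) : ℝ :=
  ∑ l, 2 ^ hi l / ∏ j ∈ univ.filter (· ≤ l), (M j : ℝ)

def extendBins (F₀ : (j : Fin L) → X → Fin (M j)) {C : Finset X}
    (φ : (j : Fin L) → C → Fin (M j)) : (j : Fin L) → X → Fin (M j) :=
  fun j => Function.extend Subtype.val (φ j) (F₀ j)

theorem extendBins_apply (F₀ : (j : Fin L) → X → Fin (M j)) {C : Finset X}
    (φ : (j : Fin L) → C → Fin (M j)) (j : Fin L) {x : X} (hx : x ∈ C) :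
    extendBins F₀ φ j x = φ j ⟨x, hx⟩ :=
  Subtype.val_injective.extend_apply (φ j) (F₀ j) ⟨x, hx⟩

theorem isOpen_setOf_mem_binningErrorEvent (P : X × Y → ℝ) (lo hi : Fin L → ℝ) (p : X × Y) :
    IsOpen {F : (j : Fin L) → X → Fin (M j) | p ∈ binningErrorEvent P lo hi F} := by
  have hcollision (l : Fin L) (x' : X) :
      IsOpen {F : (j : Fin L) → X → Fin (M j) | ∀ j, j ≤ l → F j x' = F j p.1} :=
    (isOpen_discrete {g : (j : Fin L) → Fin (M j) × Fin (M j) | ∀ j, j ≤ l → (g j).1 = (g j).2}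
      ).preimage (by fun_prop : Continuous fun (F : (j : Fin L) → X → Fin (M j)) j =>
        (F j x', F j p.1))
  convert isOpen_iUnion fun l => isOpen_iUnion fun x' =>
    isOpen_iUnion fun (_ : x' ≠ p.1 ∧ x' ∈ spectrumSlice P (lo l) (hi l) p.2) => hcollision l x'
  ext F
  simp only [binningErrorEvent, Set.mem_iUnion, Set.mem_ofPred_eq, exists_prop, and_assoc]

theorem card_filter_extendBins_eq_mul_prod {C : Finset X} (F₀ : (j : Fin L) → X → Fin (M j))
    {x x' : X} (hx : x ∈ C) (hx' : x' ∈ C) (hne : x' ≠ x) (l : Fin L) :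
    (#{φ : (j : Fin L) → C → Fin (M j) | ∀ j, j ≤ l → extendBins F₀ φ j x' = extendBins F₀ φ j x}
        : ℝ) * ∏ j ∈ univ.filter (· ≤ l), (M j : ℝ) =
      Fintype.card ((j : Fin L) → C → Fin (M j)) := by
  have hfilter : univ.filter (fun φ : (j : Fin L) → C → Fin (M j) =>
        ∀ j, j ≤ l → extendBins F₀ φ j x' = extendBins F₀ φ j x) =
      univ.filter fun φ : (j : Fin L) → C → Fin (M j) =>
        ∀ j ∈ univ.filter (· ≤ l), φ j ⟨x', hx'⟩ = φ j ⟨x, hx⟩ := by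
    ext φ
    simp only [mem_filter, mem_univ, true_and, extendBins_apply F₀ φ _ hx,
      extendBins_apply F₀ φ _ hx']
  have hcount := card_filter_forall_apply_eq_apply_mul_prod (β := fun j => Fin (M j))
    (a := (⟨x, hx⟩ : C)) (b := ⟨x', hx'⟩) (by simpa using hne.symm) (univ.filter (· ≤ l))
  rw [hfilter]
  exact_mod_cast (by simpa using hcount)

theorem card_filter_mem_binningErrorEvent_extendBins_le (hP : IsPMF P) (hlo : ∀ l, 0 < lo l)
    (hM : ∀ j, 0 < M j) {C : Finset X} (F₀ : (j : Fin L) → X → Fin (M j)) {p : X × Y}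
    (hpC : p.1 ∈ C) (hsliceC : ∀ l, spectrumSlice P (lo l) (hi l) p.2 ⊆ C) :
    (#{φ : (j : Fin L) → C → Fin (M j) | p ∈ binningErrorEvent P lo hi (extendBins F₀ φ)} : ℝ) ≤
      binningErrorBound M hi * Fintype.card ((j : Fin L) → C → Fin (M j)) := by
  set N := (Fintype.card ((j : Fin L) → C → Fin (M j)) : ℝ)
  let T l := (spectrumSlice_finite (hi := hi l) hP (hlo l) p.2).toFinset
  let collision l x' := univ.filter fun φ : (j : Fin L) → C → Fin (M j) =>
    ∀ j, j ≤ l → extendBins F₀ φ j x' = extendBins F₀ φ j p.1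
  have hsub : univ.filter (fun φ => p ∈ binningErrorEvent P lo hi (extendBins F₀ φ)) ⊆
      univ.biUnion fun l => ((T l).erase p.1).biUnion (collision l) := by
    intro φ hφ
    obtain ⟨l, x', hne, hslice, hcoll⟩ := (mem_filter.1 hφ).2
    exact mem_biUnion.2 ⟨l, mem_univ l, mem_biUnion.2
      ⟨x', mem_erase.2 ⟨hne, by simpa [T] using hslice⟩, mem_filter.2 ⟨mem_univ φ, hcoll⟩⟩⟩
  have hcollision (l : Fin L) {x'} (hx' : x' ∈ (T l).erase p.1) :
      (#(collision l x') : ℝ) = N / ∏ j ∈ univ.filter (· ≤ l), (M j : ℝ) := by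
    rw [eq_div_iff (prod_ne_zero_iff.2 fun j _ => by exact_mod_cast (hM j).ne')]
    obtain ⟨hne, hx'T⟩ := mem_erase.1 hx'
    exact card_filter_extendBins_eq_mul_prod F₀ hpC (hsliceC l (by simpa [T] using hx'T)) hne l
  have hcardT (l : Fin L) : (#((T l).erase p.1) : ℝ) ≤ 2 ^ hi l := calc
    (#((T l).erase p.1) : ℝ) ≤ #(T l) := by exact_mod_cast card_erase_le
    _ = (spectrumSlice P (lo l) (hi l) p.2).ncard := by
      rw [Set.ncard_eq_toFinset_card _ (spectrumSlice_finite hP (hlo l) p.2)]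
    _ ≤ 2 ^ hi l := ncard_spectrumSlice_le hP (hlo l) p.2
  calc (#(univ.filter fun φ => p ∈ binningErrorEvent P lo hi (extendBins F₀ φ)) : ℝ)
      ≤ ∑ l, ∑ x' ∈ (T l).erase p.1, (#(collision l x') : ℝ) := by
        refine (Nat.cast_le.2 ((card_le_card hsub).trans card_biUnion_le)).trans ?_
        push_cast
        exact sum_le_sum fun l _ => by exact_mod_cast card_biUnion_le
    _ = ∑ l, #((T l).erase p.1) * (N / ∏ j ∈ univ.filter (· ≤ l), (M j : ℝ)) := by
        refine sum_congr rfl fun l _ => ?_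
        rw [sum_congr rfl fun x' hx' => hcollision l hx', sum_const, nsmul_eq_mul]
    _ ≤ ∑ l, 2 ^ hi l * (N / ∏ j ∈ univ.filter (· ≤ l), (M j : ℝ)) :=
        sum_le_sum fun l _ => mul_le_mul_of_nonneg_right (hcardT l) (by positivity)
    _ = binningErrorBound M hi * N := by
        rw [binningErrorBound, sum_mul]
        exact sum_congr rfl fun l _ => by ring

theorem binningErrorBound_nonneg (M : Fin L → ℕ) (hi : Fin L → ℝ) : 0 ≤ binningErrorBound M hi :=
  sum_nonneg fun l _ => by positivity

theorem exists_sum_indicator_binningErrorEvent_le (hP : IsPMF P) (hlo : ∀ l, 0 < lo l)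
    (hM : ∀ j, 0 < M j) (s : Finset (X × Y)) :
    ∃ F : (j : Fin L) → X → Fin (M j),
      ∑ p ∈ s, (binningErrorEvent P lo hi F).indicator P p ≤ binningErrorBound M hi := by
  let C : Finset X := s.image Prod.fst ∪ s.biUnion fun p =>
    univ.biUnion fun l => (spectrumSlice_finite (hi := hi l) hP (hlo l) p.2).toFinset
  have hpC {p} (hp : p ∈ s) : p.1 ∈ C := mem_union_left _ (mem_image_of_mem _ hp)
  have hsliceC {p} (hp : p ∈ s) l : spectrumSlice P (lo l) (hi l) p.2 ⊆ C := fun x hx =>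
    mem_union_right _ (mem_biUnion.2 ⟨p, hp, mem_biUnion.2 ⟨l, mem_univ l, by simpa using hx⟩⟩)
  let F₀ : (j : Fin L) → X → Fin (M j) := fun j _ => ⟨0, hM j⟩
  have : Nonempty ((j : Fin L) → C → Fin (M j)) := ⟨fun j _ => ⟨0, hM j⟩⟩
  have hcard : ∀ p ∈ s,
      (#{φ : (j : Fin L) → C → Fin (M j) | p ∈ binningErrorEvent P lo hi (extendBins F₀ φ)}
        : ℝ) ≤ binningErrorBound M hi * Fintype.card ((j : Fin L) → C → Fin (M j)) :=
    fun p hp => card_filter_mem_binningErrorEvent_extendBins_le hP hlo hM F₀ (hpC hp) (hsliceC hp)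
  obtain ⟨φ, hφ⟩ := exists_sum_indicator_le_of_card_le (Ω := (j : Fin L) → C → Fin (M j))
    (fun p _ => hP.1 p) _ hcard
  refine ⟨extendBins F₀ φ, hφ.trans (mul_le_of_le_one_right (binningErrorBound_nonneg M hi) ?_)⟩
  exact (hP.summable.sum_le_tsum s fun p _ => hP.1 p).trans_eq hP.2

theorem exists_probOf_binningErrorEvent_le (hP : IsPMF P) (hlo : ∀ l, 0 < lo l)
    (hM : ∀ j, 0 < M j) :
    ∃ F : (j : Fin L) → X → Fin (M j),
      probOf P (binningErrorEvent P lo hi F) ≤ binningErrorBound M hi :=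
  exists_probOf_le_of_forall_finset hP.1 _ (isOpen_setOf_mem_binningErrorEvent P lo hi)
    (exists_sum_indicator_binningErrorEvent_le hP hlo hM)

end Binning

theorem two_rpow_div_le_of_add_le_logb {h γ Q : ℝ} (hQ : 0 < Q) (hle : h + γ ≤ Real.logb 2 Q) :
    2 ^ h / Q ≤ 2 ^ (-γ) := by
  have hQ_ge : 2 ^ (h + γ) ≤ Q := (Real.le_logb_iff_rpow_le one_lt_two hQ).1 hle
  rw [div_le_iff₀ hQ]
  calc (2 : ℝ) ^ h = 2 ^ (-γ) * 2 ^ (h + γ) := by rw [← Real.rpow_add two_pos]; ring_nf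
    _ ≤ 2 ^ (-γ) * Q := by gcongr

/-- Slices are indexed by `l : Fin L`, so `l` is the paper's `j - 1` and `λ_j = λ_min + l·Δ`. -/
theorem spectrum_sliced_binning_error_general
    {X Y : Type*}
    (PXY : X × Y → ℝ) (hPXY : IsPMF PXY)
    (lmin Δ γ : ℝ) (hlmin : 0 < lmin) (hΔ : 0 < Δ)
    (L : ℕ)
    (M : Fin L → ℕ) (hM : ∀ j, 0 < M j)
    -- incremental bin sizes: log(M_1 ⋯ M_l) ≥ λ_l + Δ + γ
    (hMsize : ∀ l : Fin L,
      lmin + (l : ℕ) * Δ + Δ + γ ≤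
        Real.logb 2 (∏ j ∈ Finset.univ.filter (fun j : Fin L => j ≤ l), (M j : ℝ))) :
    ∃ F : (j : Fin L) → X → Fin (M j),
      probOf PXY {p : X × Y | ∃ l : Fin L, ∃ x' : X, x' ≠ p.1 ∧
          (lmin + (l : ℕ) * Δ ≤ -Real.logb 2 (pcondXY PXY (x', p.2)) ∧
            -Real.logb 2 (pcondXY PXY (x', p.2)) < lmin + (l : ℕ) * Δ + Δ) ∧
          ∀ j : Fin L, j ≤ l → F j x' = F j p.1}
        ≤ (L : ℝ) * (2 : ℝ) ^ (-γ) := by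
  obtain ⟨F, hF⟩ := exists_probOf_binningErrorEvent_le (lo := fun l : Fin L => lmin + (l : ℕ) * Δ)
    (hi := fun l => lmin + (l : ℕ) * Δ + Δ) hPXY (fun l => by positivity) hM
  refine ⟨F, hF.trans ?_⟩
  calc binningErrorBound M (fun l => lmin + (l : ℕ) * Δ + Δ)
      ≤ ∑ _l : Fin L, (2 : ℝ) ^ (-γ) := sum_le_sum fun l _ =>
        two_rpow_div_le_of_add_le_logb (prod_pos fun j _ => by exact_mod_cast hM j) (hMsize l)
    _ = L * 2 ^ (-γ) := by simp

/-- error bound for spectrum-sliced incremental random binning.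
Slices are indexed by `l : Fin L` (`l` corresponds to `j = l+1` of the paper, so
`λ_j = λ_min + (j−1)·Δ` becomes `λ_min + l·Δ`); `𝒯_l` is the set of pairs with
`λ_min + l·Δ ≤ −log P_{X|Y}(x|y) < λ_min + l·Δ + Δ`. -/
theorem spectrum_sliced_binning_error
    {X Y : Type*} [Countable X] [Countable Y]
    (PXY : X × Y → ℝ) (hPXY : IsPMF PXY)
    (lmin Δ γ : ℝ) (hlmin : 0 < lmin) (hΔ : 0 < Δ) (hγ : 0 < γ)
    (L : ℕ) (hL : 0 < L)
    (M : Fin L → ℕ) (hM : ∀ j, 0 < M j)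
    -- incremental bin sizes: log(M_1 ⋯ M_l) ≥ λ_l + Δ + γ
    (hMsize : ∀ l : Fin L,
      lmin + (l : ℕ) * Δ + Δ + γ ≤
        Real.logb 2 (∏ j ∈ Finset.univ.filter (fun j : Fin L => j ≤ l), (M j : ℝ))) :
    ∃ F : (j : Fin L) → X → Fin (M j),
      probOf PXY {p : X × Y | ∃ l : Fin L, ∃ x' : X, x' ≠ p.1 ∧
          (lmin + (l : ℕ) * Δ ≤ -Real.logb 2 (pcondXY PXY (x', p.2)) ∧
            -Real.logb 2 (pcondXY PXY (x', p.2)) < lmin + (l : ℕ) * Δ + Δ) ∧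
          ∀ j : Fin L, j ≤ l → F j x' = F j p.1}
        ≤ (L : ℝ) * (2 : ℝ) ^ (-γ) :=
  spectrum_sliced_binning_error_general PXY hPXY lmin Δ γ hlmin hΔ L M hM hMsize
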